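/- arXiv:2008.01629 — 3 statements merged into one kernel-verified Lean document; each statement's English description precedes it below -/
import Mathlib

section
/- The order-zero condition holds: for all elements a, b of the twisted algebra, [π(a), J·π(b)*·J⁻¹] = 0, where * denotes conjugate transpose; i.e. the representation of the twisted algebra commutes with the conjugate action of the opposite algebra induced by the real structure J. -/
open Matrix

noncomputable section

namespace TwistSM

/-! ### Dirac matrices -/

def pauli1 : Matrix (Fin 2) (Fin 2) ℂ := !![0, 1; 1, 0]
def pauli2 : Matrix (Fin 2) (Fin 2) ℂ := !![0, -Complex.I; Complex.I, 0]
def pauli3 : Matrix (Fin 2) (Fin 2) ℂ := !![1, 0; 0, -1]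

/-- σ^μ = (I₂, −iσ₁, −iσ₂, −iσ₃) -/
def sigE : Fin 4 → Matrix (Fin 2) (Fin 2) ℂ :=
  ![1, (-Complex.I) • pauli1, (-Complex.I) • pauli2, (-Complex.I) • pauli3]
/-- σ̃^μ = (I₂, iσ₁, iσ₂, iσ₃) -/
def sigTE : Fin 4 → Matrix (Fin 2) (Fin 2) ℂ :=
  ![1, Complex.I • pauli1, Complex.I • pauli2, Complex.I • pauli3]

/-- Diagonal 2×2 block matrix [[A,0],[0,B]] over a leading `Fin 2` index. -/
def dgB {m : Type} (A B : Matrix m m ℂ) : Matrix (Fin 2 × m) (Fin 2 × m) ℂ :=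
  Matrix.of fun p q =>
    if p.1 = q.1 then (if p.1 = 0 then A p.2 q.2 else B p.2 q.2) else 0

/-- Off-diagonal 2×2 block matrix [[0,A],[B,0]] over a leading `Fin 2` index. -/
def odB {m : Type} (A B : Matrix m m ℂ) : Matrix (Fin 2 × m) (Fin 2 × m) ℂ :=
  Matrix.of fun p q =>
    if p.1 = 0 then (if q.1 = 0 then 0 else A p.2 q.2)
    else (if q.1 = 0 then B p.2 q.2 else 0)

/-- Euclidean Dirac matrices γ^μ_E = [[0, σ^μ],[σ̃^μ, 0]], acting on the spinor
indices (s, ṡ). -/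
def gammaE (μ : Fin 4) : Matrix (Fin 2 × Fin 2) (Fin 2 × Fin 2) ℂ := odB (sigE μ) (sigTE μ)

/-- Entrywise complex conjugation of a matrix. -/
def mconj {m n : Type} (A : Matrix m n ℂ) : Matrix m n ℂ := A.map (starRingEnd ℂ)

/-- C = i γ⁰_E γ²_E (the matrix part of the charge conjugation 𝒥 = C ∘ cc). -/
def Kspin : Matrix (Fin 2 × Fin 2) (Fin 2 × Fin 2) ℂ := Complex.I • (gammaE 0 * gammaE 2)

/-! ### The twisted algebra and its representation on ℂ¹²⁸ -/

/-- Quaternionic 2×2 matrices: of the form [[α,β],[−conj β, conj α]]. -/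
def IsQuat (q : Matrix (Fin 2) (Fin 2) ℂ) : Prop :=
  q 1 0 = -(starRingEnd ℂ) (q 0 1) ∧ q 1 1 = (starRingEnd ℂ) (q 0 0)

/-- An element (c, c', q, q', m, m') of the twisted algebra. -/
structure Alg : Type where
  c : ℂ
  c' : ℂ
  q : Matrix (Fin 2) (Fin 2) ℂ
  q' : Matrix (Fin 2) (Fin 2) ℂ
  m : Matrix (Fin 3) (Fin 3) ℂ
  m' : Matrix (Fin 3) (Fin 3) ℂ
  hq : IsQuat q
  hq' : IsQuat q'

/-- The twist ρ: exchange primed and unprimed entries. -/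
def Alg.rho (a : Alg) : Alg := ⟨a.c', a.c, a.q', a.q, a.m', a.m, a.hq', a.hq⟩

/-- Flavour index α, as a pair (flavour pair, index within the pair):
(0,0) = 1̇, (0,1) = 2̇, (1,0) = 1, (1,1) = 2. -/
abbrev Flav : Type := Fin 2 × Fin 2
/-- Internal index (I, α): lepto-colour I ∈ Fin 4 and flavour α. -/
abbrev Intl : Type := Fin 4 × Flav
/-- (ṡ, (I, α)) -/
abbrev HalfNoS : Type := Fin 2 × Intl
/-- Half of the full space: (s, ṡ, (I, α)). -/
abbrev Half : Type := Fin 2 × HalfNoS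
/-- ℂ¹²⁸, indexed by (C, s, ṡ, (I, α)). -/
abbrev Full : Type := Fin 2 × Half

/-- diag(c, conj c) as a 2×2 matrix. -/
def cdiag (c : ℂ) : Matrix (Fin 2) (Fin 2) ℂ := Matrix.diagonal ![c, (starRingEnd ℂ) c]

def pred3 (i : Fin 4) : Fin 3 := ⟨i.val - 1, by have := i.isLt; omega⟩

/-- diag(c, m) as a 4×4 matrix on the lepto-colour index. -/
def sm4 (c : ℂ) (m : Matrix (Fin 3) (Fin 3) ℂ) : Matrix (Fin 4) (Fin 4) ℂ :=
  Matrix.of fun i j =>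
    if i = 0 then (if j = 0 then c else 0)
    else if j = 0 then 0 else m (pred3 i) (pred3 j)

/-- Q_r = diag(c, conj c, q') on the flavour index. -/
def Qr (a : Alg) : Matrix Flav Flav ℂ := dgB (cdiag a.c) a.q'
/-- Q_l = diag(c', conj c', q) on the flavour index. -/
def Ql (a : Alg) : Matrix Flav Flav ℂ := dgB (cdiag a.c') a.q

/-- diag_α(A⊗I₂, B⊗I₂) on (I, α). -/
def msect (A B : Matrix (Fin 4) (Fin 4) ℂ) : Matrix Intl Intl ℂ :=
  Matrix.of fun p q =>
    if p.2 = q.2 then (if p.2.1 = 0 then A p.1 q.1 else B p.1 q.1) else 0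

/-- M_r = diag_α(𝗆⊗I₂, 𝗆'⊗I₂). -/
def Mr (a : Alg) : Matrix Intl Intl ℂ := msect (sm4 a.c a.m) (sm4 a.c' a.m')
/-- M_l = diag_α(𝗆'⊗I₂, 𝗆⊗I₂). -/
def Ml (a : Alg) : Matrix Intl Intl ℂ := msect (sm4 a.c' a.m') (sm4 a.c a.m)

/-- Lift a flavour matrix to (ṡ, (I, α)), acting trivially on ṡ and I. -/
def liftQ (X : Matrix Flav Flav ℂ) : Matrix HalfNoS HalfNoS ℂ :=
  Matrix.of fun p q => if p.1 = q.1 ∧ p.2.1 = q.2.1 then X p.2.2 q.2.2 else 0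

/-- Lift a matrix on (I, α) to (ṡ, (I, α)), acting trivially on ṡ. -/
def liftI (X : Matrix Intl Intl ℂ) : Matrix HalfNoS HalfNoS ℂ :=
  Matrix.of fun p q => if p.1 = q.1 then X p.2 q.2 else 0

/-- The Q-block of the representation: diag_s(Q_r, Q_l), trivial on ṡ and I. -/
def Qmat (a : Alg) : Matrix Half Half ℂ := dgB (liftQ (Qr a)) (liftQ (Ql a))
/-- The M-block of the representation: diag_s(M_r, M_l), trivial on ṡ. -/
def Mmat (a : Alg) : Matrix Half Half ℂ := dgB (liftI (Mr a)) (liftI (Ml a))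

/-- The representation π(a) = diag_C(Q, M) of the twisted algebra on ℂ¹²⁸. -/
def rep (a : Alg) : Matrix Full Full ℂ := dgB (Qmat a) (Mmat a)

/-- Twisted commutator [T, π(b)]_ρ = T·π(b) − π(ρ(b))·T. -/
def tcomm (T : Matrix Full Full ℂ) (b : Alg) : Matrix Full Full ℂ :=
  T * rep b - rep b.rho * T

/-- K = (i γ⁰_E γ²_E) ⊗ ξ ⊗ I₁₆ (with ξ on the internal index C);
the real structure is J = K ∘ cc. -/
def Kmat : Matrix Full Full ℂ :=
  Matrix.of fun p q =>
    (!![0, 1; 1, 0] : Matrix (Fin 2) (Fin 2) ℂ) p.1 q.1 *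
      Kspin (p.2.1, p.2.2.1) (q.2.1, q.2.2.1) *
      (if p.2.2.2 = q.2.2.2 then 1 else 0)

/-- J T J⁻¹ = −K · conj(T) · conj(K) as a matrix operation. -/
def Jconj (T : Matrix Full Full ℂ) : Matrix Full Full ℂ := -(Kmat * mconj T * mconj Kmat)

/-! ### Yukawa and Majorana parts of the Dirac operator -/

/-- 𝗄^I = diag(k_u^I, k_d^I). -/
def kdiag (kν ke ku kd : ℂ) (i : Fin 4) : Matrix (Fin 2) (Fin 2) ℂ :=
  if i = 0 then Matrix.diagonal ![kν, ke] else Matrix.diagonal ![ku, kd]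

/-- Block-diagonal matrix on (I, α) from a family of flavour matrices. -/
def diagI (F : Fin 4 → Matrix Flav Flav ℂ) : Matrix Intl Intl ℂ :=
  Matrix.of fun p q => if p.1 = q.1 then F p.1 p.2 q.2 else 0

/-- The Yukawa mass matrix D₀ = diag_I(D₀^I), D₀^I = [[0, conj 𝗄^I],[𝗄^I, 0]]. -/
def D0 (kν ke ku kd : ℂ) : Matrix Intl Intl ℂ :=
  diagI fun i => odB (mconj (kdiag kν ke ku kd i)) (kdiag kν ke ku kd i)

/-- η ⊗ X, with η = diag_s(1,−1) ⊗ I₂ on (s, ṡ) and X on (I, α). -/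
def etaD (X : Matrix Intl Intl ℂ) : Matrix Half Half ℂ := dgB (liftI X) (liftI (-X))

/-- γ⁵ ⊗ D_Y = diag_C(η⊗D₀, η⊗D₀†). -/
def g5DY (kν ke ku kd : ℂ) : Matrix Full Full ℂ :=
  dgB (etaD (D0 kν ke ku kd)) (etaD ((D0 kν ke ku kd)ᴴ))

/-- Ξ = diag(1,0,0,0)_I ⊗ diag(1,0,0,0)_α on (I, α). -/
def XiI : Matrix Intl Intl ℂ :=
  Matrix.of fun p q =>
    if p = q ∧ p.1 = 0 ∧ p.2 = ((0 : Fin 2), (0 : Fin 2)) then 1 else 0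

/-- γ⁵ ⊗ D_M = [[0, η⊗D_R],[η⊗D_R†, 0]]_C with D_R = k_R Ξ. -/
def g5DM (kR : ℂ) : Matrix Full Full ℂ :=
  odB (etaD (kR • XiI)) (etaD ((kR • XiI)ᴴ))

/-! ### The free 1-form -/

/-- Lift a spinor matrix (on (s, ṡ)) to ℂ¹²⁸, identity on C and (I, α). -/
def liftSpin (G : Matrix (Fin 2 × Fin 2) (Fin 2 × Fin 2) ℂ) : Matrix Full Full ℂ :=
  Matrix.of fun p q =>
    (if p.1 = q.1 ∧ p.2.2.2 = q.2.2.2 then 1 else 0) * G (p.2.1, p.2.2.1) (q.2.1, q.2.2.1)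

/-- Q_μ = diag_s(Q^r_μ, Q^l_μ), Q^{r/l}_μ = diag(c^{r/l}, conj c^{r/l}, q^{r/l}),
trivial on ṡ and I. -/
def freeQ (cr cl : ℂ) (qr ql : Matrix (Fin 2) (Fin 2) ℂ) : Matrix Half Half ℂ :=
  dgB (liftQ (dgB (cdiag cr) qr)) (liftQ (dgB (cdiag cl) ql))

/-- M_μ = diag_s(M^r_μ, M^l_μ), M^r_μ = diag_α(𝗆^r⊗I₂, 𝗆^l⊗I₂), 𝗆^{r/l} = diag(c^{r/l}, m^{r/l}),
trivial on ṡ. -/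
def freeM (cr cl : ℂ) (mr ml : Matrix (Fin 3) (Fin 3) ℂ) : Matrix Half Half ℂ :=
  dgB (liftI (msect (sm4 cr mr) (sm4 cl ml))) (liftI (msect (sm4 cl ml) (sm4 cr mr)))

/-- The free 1-form coefficient matrix A_μ = diag_C(Q_μ, M_μ). -/
def freeA (cr cl : ℂ) (qr ql : Matrix (Fin 2) (Fin 2) ℂ)
    (mr ml : Matrix (Fin 3) (Fin 3) ℂ) : Matrix Full Full ℂ :=
  dgB (freeQ cr cl qr ql) (freeM cr cl mr ml)

/-! ### Partial derivatives -/

/-- Partial derivative in the μ-th coordinate direction of ℝ⁴ (ℂ-valued). -/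
def pdC (μ : Fin 4) (f : (Fin 4 → ℝ) → ℂ) (x : Fin 4 → ℝ) : ℂ :=
  fderiv ℝ f x (Pi.single μ 1)

/-- Partial derivative in the μ-th coordinate direction of ℝ⁴ (ℝ-valued). -/
def pdR (μ : Fin 4) (f : (Fin 4 → ℝ) → ℝ) (x : Fin 4 → ℝ) : ℝ :=
  fderiv ℝ f x (Pi.single μ 1)

/-- Entrywise partial derivative of a matrix-valued function. -/
def pdM {m n : Type} (μ : Fin 4) (F : (Fin 4 → ℝ) → Matrix m n ℂ) (x : Fin 4 → ℝ) :
    Matrix m n ℂ :=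
  Matrix.of fun i j => pdC μ (fun y => F y i j) x



/-! ### Auxiliary lemmas for statement3 -/

open Kronecker

set_option linter.unusedSectionVars false

section Aux

variable {m : Type} [Fintype m] (A B C D : Matrix m m ℂ)

lemma dgB_mul_dgB : dgB A B * dgB C D = dgB (A * C) (B * D) := by
  ext ⟨i, p⟩ ⟨j, q⟩
  simp only [Matrix.mul_apply, Fintype.sum_prod_type, Fin.sum_univ_two, dgB, Matrix.of_apply]
  fin_cases i <;> fin_cases j <;> simp [Matrix.mul_apply]

lemma odB_mul_dgB : odB A B * dgB C D = odB (A * D) (B * C) := by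
  ext ⟨i, p⟩ ⟨j, q⟩
  simp only [Matrix.mul_apply, Fintype.sum_prod_type, Fin.sum_univ_two, dgB, odB, Matrix.of_apply]
  fin_cases i <;> fin_cases j <;> simp [Matrix.mul_apply]

lemma dgB_mul_odB : dgB A B * odB C D = odB (A * C) (B * D) := by
  ext ⟨i, p⟩ ⟨j, q⟩
  simp only [Matrix.mul_apply, Fintype.sum_prod_type, Fin.sum_univ_two, dgB, odB, Matrix.of_apply]
  fin_cases i <;> fin_cases j <;> simp [Matrix.mul_apply]

lemma odB_mul_odB : odB A B * odB C D = dgB (A * D) (B * C) := by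
  ext ⟨i, p⟩ ⟨j, q⟩
  simp only [Matrix.mul_apply, Fintype.sum_prod_type, Fin.sum_univ_two, dgB, odB, Matrix.of_apply]
  fin_cases i <;> fin_cases j <;> simp [Matrix.mul_apply]

lemma dgB_transpose : (dgB A B)ᵀ = dgB Aᵀ Bᵀ := by
  ext ⟨i, p⟩ ⟨j, q⟩
  fin_cases i <;> fin_cases j <;> simp [dgB]

lemma dgB_neg : dgB (-A) (-B) = -(dgB A B) := by
  ext ⟨i, p⟩ ⟨j, q⟩
  fin_cases i <;> fin_cases j <;> simp [dgB]

lemma dgB_sub : dgB A B - dgB C D = dgB (A - C) (B - D) := by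
  ext ⟨i, p⟩ ⟨j, q⟩
  fin_cases i <;> fin_cases j <;> simp [dgB]

lemma dgB_zero : dgB (0 : Matrix m m ℂ) 0 = 0 := by
  ext ⟨i, p⟩ ⟨j, q⟩
  fin_cases i <;> fin_cases j <;> simp [dgB]

lemma mconj_dgB : mconj (dgB A B) = dgB (mconj A) (mconj B) := by
  ext ⟨i, p⟩ ⟨j, q⟩
  fin_cases i <;> fin_cases j <;> simp [dgB, mconj]

lemma mconj_odB : mconj (odB A B) = odB (mconj A) (mconj B) := by
  ext ⟨i, p⟩ ⟨j, q⟩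
  fin_cases i <;> fin_cases j <;> simp [odB, mconj]

end Aux

lemma mconj_conjTranspose {m : Type} (T : Matrix m m ℂ) : mconj (Tᴴ) = Tᵀ := by
  ext p q
  simp [mconj, Matrix.conjTranspose_apply]

lemma liftI_eq (Y : Matrix Intl Intl ℂ) : liftI Y = (1 : Matrix (Fin 2) (Fin 2) ℂ) ⊗ₖ Y := by
  ext ⟨t, p⟩ ⟨t', q⟩
  simp [liftI, Matrix.one_apply, kroneckerMap_apply, ite_mul]

lemma liftQ_eq (X : Matrix Flav Flav ℂ) :
    liftQ X = liftI ((1 : Matrix (Fin 4) (Fin 4) ℂ) ⊗ₖ X) := by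
  ext ⟨t, i, f⟩ ⟨t', i', g⟩
  simp [liftQ, liftI, Matrix.one_apply, kroneckerMap_apply, ite_mul, ite_and]

/-- P ⊗ 1 on (ṡ, (I, α)), acting only on ṡ. -/
def lnos (P : Matrix (Fin 2) (Fin 2) ℂ) : Matrix HalfNoS HalfNoS ℂ :=
  P ⊗ₖ (1 : Matrix Intl Intl ℂ)

lemma lnos_sandwich (P P' : Matrix (Fin 2) (Fin 2) ℂ) (Z : Matrix Intl Intl ℂ) :
    lnos P * liftI Z * lnos P' = (P * P') ⊗ₖ Z := by
  simp only [liftI_eq, lnos, ← Matrix.mul_kronecker_mul, mul_one, one_mul]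

lemma neg_one_kron (Z : Matrix Intl Intl ℂ) :
    (-1 : Matrix (Fin 2) (Fin 2) ℂ) ⊗ₖ Z = -(liftI Z) := by
  rw [liftI_eq]
  ext ⟨t, p⟩ ⟨t', q⟩
  simp [kroneckerMap_apply]

lemma pauli2_sq : pauli2 * pauli2 = 1 := by
  ext i j
  fin_cases i <;> fin_cases j <;>
    simp [pauli2, Matrix.mul_apply, Fin.sum_univ_two, Matrix.one_apply, Complex.I_mul_I] <;> ring_nf <;>
    simp [Complex.I_mul_I]

lemma mconj_pauli2 : mconj pauli2 = -pauli2 := by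
  ext i j
  fin_cases i <;> fin_cases j <;> simp [pauli2, mconj]

lemma mconj_lnos (P : Matrix (Fin 2) (Fin 2) ℂ) : mconj (lnos P) = lnos (mconj P) := by
  ext ⟨t, p⟩ ⟨t', q⟩
  simp [lnos, mconj, kroneckerMap_apply, Matrix.one_apply, apply_ite (starRingEnd ℂ)]

lemma sandwichNP (Z : Matrix Intl Intl ℂ) :
    lnos (-pauli2) * liftI Z * lnos pauli2 = -(liftI Z) := by
  rw [lnos_sandwich, neg_mul, pauli2_sq, neg_one_kron]

lemma sandwichPN (Z : Matrix Intl Intl ℂ) :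
    lnos pauli2 * liftI Z * lnos (-pauli2) = -(liftI Z) := by
  rw [lnos_sandwich, mul_neg, pauli2_sq, neg_one_kron]

lemma Kspin_eq : Kspin = dgB (-pauli2) pauli2 := by
  ext ⟨a, b⟩ ⟨c, d⟩
  fin_cases a <;> fin_cases b <;> fin_cases c <;> fin_cases d <;>
    simp [Kspin, gammaE, odB, dgB, sigE, sigTE, pauli1, pauli2, pauli3, Matrix.one_apply,
      Matrix.mul_apply, Fintype.sum_prod_type, Fin.sum_univ_two]

/-- The spin part of K on `Half`. -/
def Vsp : Matrix Half Half ℂ := dgB (lnos (-pauli2)) (lnos pauli2)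
def Vsp' : Matrix Half Half ℂ := dgB (lnos pauli2) (lnos (-pauli2))

lemma Kmat_eq : Kmat = odB Vsp Vsp := by
  ext ⟨c, s, t, ia⟩ ⟨c', s', t', ia'⟩
  fin_cases c <;> fin_cases c' <;> fin_cases s <;> fin_cases s' <;>
    simp [Kmat, odB, dgB, Vsp, lnos, kroneckerMap_apply, Matrix.one_apply, Kspin_eq,
      mul_comm, mul_ite, ite_mul]

lemma mconj_Kmat : mconj Kmat = odB Vsp' Vsp' := by
  have h : mconj Vsp = Vsp' := by
    simp only [Vsp, Vsp', mconj_dgB, mconj_lnos, mconj_pauli2]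
    congr 1
    · rw [show mconj (-pauli2) = -(mconj pauli2) by ext i j; simp [mconj], mconj_pauli2, neg_neg]
  rw [Kmat_eq, mconj_odB, h]

lemma liftI_transpose (Y : Matrix Intl Intl ℂ) : (liftI Y)ᵀ = liftI Yᵀ := by
  ext ⟨t, p⟩ ⟨t', q⟩
  simp [liftI, eq_comm]

lemma liftQ_transpose (X : Matrix Flav Flav ℂ) : (liftQ X)ᵀ = liftQ Xᵀ := by
  ext ⟨t, i, f⟩ ⟨t', i', g⟩
  simp [liftQ, eq_comm, and_comm]

lemma msect_transpose (A B : Matrix (Fin 4) (Fin 4) ℂ) :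
    (msect A B)ᵀ = msect Aᵀ Bᵀ := by
  ext ⟨i, f⟩ ⟨i', g⟩
  by_cases h : f = g
  · subst h; simp [msect]
  · simp [msect, h, Ne.symm h, eq_comm]

lemma dgB_transpose_flav (E F : Matrix (Fin 2) (Fin 2) ℂ) :
    (dgB E F)ᵀ = dgB Eᵀ Fᵀ := dgB_transpose E F

/-- Core commutation at the `Intl` level. -/
lemma core_comm (E F : Matrix (Fin 2) (Fin 2) ℂ) (A B : Matrix (Fin 4) (Fin 4) ℂ) :
    ((1 : Matrix (Fin 4) (Fin 4) ℂ) ⊗ₖ dgB E F) * msect A B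
      = msect A B * ((1 : Matrix (Fin 4) (Fin 4) ℂ) ⊗ₖ dgB E F) := by
  ext ⟨i, f1, f2⟩ ⟨i', g1, g2⟩
  simp only [Matrix.mul_apply, Fintype.sum_prod_type, kroneckerMap_apply, Matrix.one_apply,
    msect, dgB, Matrix.of_apply, ite_mul, mul_ite, zero_mul, mul_zero, one_mul, mul_one,
    Finset.sum_ite_eq, Finset.sum_ite_eq', Finset.mem_univ, if_true, Prod.mk.injEq, ite_and]
  fin_cases f1 <;> fin_cases g1 <;>
    simp [Fin.sum_univ_two, Finset.mul_sum, Finset.sum_mul, mul_comm]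

lemma liftI_mul (X Y : Matrix Intl Intl ℂ) : liftI X * liftI Y = liftI (X * Y) := by
  simp only [liftI_eq, ← Matrix.mul_kronecker_mul, one_mul]

/-- Core commutation lifted to `HalfNoS`. -/
lemma comm_QM (E F : Matrix (Fin 2) (Fin 2) ℂ) (A B : Matrix (Fin 4) (Fin 4) ℂ) :
    liftQ (dgB E F) * liftI (msect A B) = liftI (msect A B) * liftQ (dgB E F) := by
  rw [liftQ_eq, liftI_mul, liftI_mul, core_comm]


/-- the order-zero condition [π(a), J·π(b)*·J⁻¹] = 0. -/
theorem statement3 (a b : Alg) :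
    rep a * Jconj ((rep b)ᴴ) - Jconj ((rep b)ᴴ) * rep a = 0 := by
  -- Step 1: compute Jconj ((rep b)ᴴ) = dgB (Mmat b)ᵀ (Qmat b)ᵀ
  have hreT : (rep b)ᵀ = dgB (Qmat b)ᵀ (Mmat b)ᵀ := dgB_transpose _ _
  have hQt : (Qmat b)ᵀ = dgB (liftI ((1 : Matrix (Fin 4) (Fin 4) ℂ) ⊗ₖ (Qr b)ᵀ))
      (liftI ((1 : Matrix (Fin 4) (Fin 4) ℂ) ⊗ₖ (Ql b)ᵀ)) := by
    rw [Qmat, dgB_transpose, liftQ_transpose, liftQ_transpose, liftQ_eq, liftQ_eq]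
  have hMt : (Mmat b)ᵀ = dgB (liftI (Mr b)ᵀ) (liftI (Ml b)ᵀ) := by
    rw [Mmat, dgB_transpose, liftI_transpose, liftI_transpose]
  have hVQ : Vsp * (Qmat b)ᵀ * Vsp' = -(Qmat b)ᵀ := by
    rw [hQt, Vsp, Vsp', dgB_mul_dgB, dgB_mul_dgB, sandwichNP, sandwichPN, dgB_neg]
  have hVM : Vsp * (Mmat b)ᵀ * Vsp' = -(Mmat b)ᵀ := by
    rw [hMt, Vsp, Vsp', dgB_mul_dgB, dgB_mul_dgB, sandwichNP, sandwichPN, dgB_neg]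
  have hJ : Jconj ((rep b)ᴴ) = dgB (Mmat b)ᵀ (Qmat b)ᵀ := by
    rw [Jconj, mconj_conjTranspose, mconj_Kmat, Kmat_eq, hreT,
      odB_mul_dgB, odB_mul_odB, mul_assoc, mul_assoc, ← mul_assoc Vsp ((Mmat b)ᵀ),
      ← mul_assoc Vsp ((Qmat b)ᵀ), hVQ, hVM, ← dgB_neg, neg_neg, neg_neg]
  -- Step 2: commutation
  have hQM : Qmat a * (Mmat b)ᵀ = (Mmat b)ᵀ * Qmat a := by
    rw [show (Mmat b)ᵀ = dgB (liftI (msect (sm4 b.c b.m)ᵀ (sm4 b.c' b.m')ᵀ))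
        (liftI (msect (sm4 b.c' b.m')ᵀ (sm4 b.c b.m)ᵀ)) by
      rw [Mmat, dgB_transpose, liftI_transpose, liftI_transpose, Mr, Ml,
        msect_transpose, msect_transpose]]
    rw [Qmat, Qr, Ql, dgB_mul_dgB, dgB_mul_dgB, comm_QM, comm_QM]
  have hMQ : Mmat a * (Qmat b)ᵀ = (Qmat b)ᵀ * Mmat a := by
    rw [show (Qmat b)ᵀ = dgB (liftQ (dgB (cdiag b.c)ᵀ (b.q')ᵀ))
        (liftQ (dgB (cdiag b.c')ᵀ (b.q)ᵀ)) by
      rw [Qmat, dgB_transpose, liftQ_transpose, liftQ_transpose, Qr, Ql,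
        dgB_transpose, dgB_transpose]]
    rw [Mmat, Mr, Ml, dgB_mul_dgB, dgB_mul_dgB, ← comm_QM, ← comm_QM]
  -- Step 3: assemble
  rw [hJ, rep, dgB_mul_dgB, dgB_mul_dgB, dgB_sub, hQM, hMQ, sub_self, sub_self, dgB_zero]



end TwistSM
end
end

section
/- Assume the Yukawa couplings k_ν, k_e, k_u, k_d are all nonzero. Then the diagonal twisted 1-form A_Y = diag_C(A, 0), with A = diag_s(A_r, A_l), A_r = [[0, conj(𝗄^I)·H₁],[H₂·𝗄^I, 0]] and A_l = −[[0, conj(𝗄^I)·H'₁],[H'₂·𝗄^I, 0]] on each lepto-colour block I, is a Hermitian matrix if and only if H₂ = H₁† and H'₂ = (H'₁)†, where † is conjugate transpose. Thus a selfadjoint diagonal twisted 1-form is parametrized by two independent quaternionic matrices H_r := H₂ = H₁† and H_l := H'₂ = (H'₁)†. -/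
open Matrix

noncomputable section

namespace TwistSM

/-! ### Auxiliary lemmas for statement 6 -/

lemma dgB_ct {m : Type} (A B : Matrix m m ℂ) : (dgB A B)ᴴ = dgB Aᴴ Bᴴ := by
  ext ⟨i, p⟩ ⟨j, q⟩
  by_cases h : i = j
  · subst h
    by_cases hi : i = 0 <;> simp [dgB, Matrix.conjTranspose_apply, hi]
  · simp [dgB, Matrix.conjTranspose_apply, h, Ne.symm h]

lemma odB_ct {m : Type} (A B : Matrix m m ℂ) : (odB A B)ᴴ = odB Bᴴ Aᴴ := by
  ext ⟨i, p⟩ ⟨j, q⟩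
  by_cases hi : i = 0 <;> by_cases hj : j = 0 <;>
    simp [odB, Matrix.conjTranspose_apply, hi, hj]

lemma liftI_ct (X : Matrix Intl Intl ℂ) : (liftI X)ᴴ = liftI Xᴴ := by
  ext ⟨i, p⟩ ⟨j, q⟩
  by_cases h : i = j
  · subst h; simp [liftI, Matrix.conjTranspose_apply]
  · simp [liftI, h, Ne.symm h, Matrix.conjTranspose_apply]

lemma diagI_ct (F : Fin 4 → Matrix Flav Flav ℂ) :
    (diagI F)ᴴ = diagI fun I => (F I)ᴴ := by
  ext ⟨i, p⟩ ⟨j, q⟩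
  by_cases h : i = j
  · subst h; simp [diagI, Matrix.conjTranspose_apply]
  · simp [diagI, h, Ne.symm h, Matrix.conjTranspose_apply]

lemma dgB_inj {m : Type} {A B A' B' : Matrix m m ℂ} (h : dgB A B = dgB A' B') :
    A = A' ∧ B = B' := by
  constructor <;> ext p q
  · simpa [dgB] using congrFun (congrFun h (0, p)) (0, q)
  · simpa [dgB] using congrFun (congrFun h (1, p)) (1, q)

lemma odB_inj {m : Type} {A B A' B' : Matrix m m ℂ} (h : odB A B = odB A' B') :
    A = A' ∧ B = B' := by
  constructor <;> ext p q
  · simpa [odB] using congrFun (congrFun h (0, p)) (1, q)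
  · simpa [odB] using congrFun (congrFun h (1, p)) (0, q)

lemma liftI_inj {X Y : Matrix Intl Intl ℂ} (h : liftI X = liftI Y) : X = Y := by
  ext p q
  simpa [liftI] using congrFun (congrFun h (0, p)) (0, q)

lemma diagI_inj {F G : Fin 4 → Matrix Flav Flav ℂ} (h : diagI F = diagI G) (I : Fin 4) :
    F I = G I := by
  ext p q
  simpa [diagI] using congrFun (congrFun h (I, p)) (I, q)

lemma ct_eq {m : Type} (A : Matrix m m ℂ) : Aᴴ = Aᵀ.map (starRingEnd ℂ) := rfl

lemma mconj_ct {m : Type} (A : Matrix m m ℂ) : (mconj A)ᴴ = Aᵀ := by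
  ext p q
  exact star_star (A q p)

lemma kdiag_t (kν ke ku kd : ℂ) (i : Fin 4) :
    (kdiag kν ke ku kd i)ᵀ = kdiag kν ke ku kd i := by
  unfold kdiag; split <;> simp

lemma kdiag_ct (kν ke ku kd : ℂ) (i : Fin 4) :
    (kdiag kν ke ku kd i)ᴴ = mconj (kdiag kν ke ku kd i) := by
  rw [ct_eq, kdiag_t]; rfl

lemma cancel_diag {d : Fin 2 → ℂ} (hd : ∀ j, d j ≠ 0)
    {M N : Matrix (Fin 2) (Fin 2) ℂ} (h : M * Matrix.diagonal d = N * Matrix.diagonal d) :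
    M = N := by
  ext i j
  have := congrFun (congrFun h i) j
  rw [Matrix.mul_diagonal, Matrix.mul_diagonal] at this
  exact mul_right_cancel₀ (hd j) this

/-- for nonzero Yukawa couplings, the diagonal twisted 1-form A_Y is
Hermitian iff H₂ = H₁† and H'₂ = (H'₁)†. -/
theorem statement6 (kν ke ku kd : ℂ)
    (hν : kν ≠ 0) (he : ke ≠ 0) (hu : ku ≠ 0) (hd : kd ≠ 0)
    (H1 H2 H1' H2' : Matrix (Fin 2) (Fin 2) ℂ)
    (h1 : IsQuat H1) (h2 : IsQuat H2) (h1' : IsQuat H1') (h2' : IsQuat H2') :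
    (dgB (dgB
        (liftI (diagI fun I =>
          odB (mconj (kdiag kν ke ku kd I) * H1) (H2 * kdiag kν ke ku kd I)))
        (liftI (diagI fun I =>
          -odB (mconj (kdiag kν ke ku kd I) * H1') (H2' * kdiag kν ke ku kd I))))
        (0 : Matrix Half Half ℂ)).IsHermitian
      ↔ (H2 = H1ᴴ ∧ H2' = H1'ᴴ) := by
  constructor
  · intro h
    have h' := (Matrix.IsHermitian.eq h)
    rw [dgB_ct, dgB_ct, liftI_ct, liftI_ct, diagI_ct, diagI_ct,
      Matrix.conjTranspose_zero] at h'
    obtain ⟨hQ, -⟩ := dgB_inj h'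
    obtain ⟨hr, hl⟩ := dgB_inj hQ
    have hr0 : (odB (mconj (kdiag kν ke ku kd 0) * H1) (H2 * kdiag kν ke ku kd 0))ᴴ
        = odB (mconj (kdiag kν ke ku kd 0) * H1) (H2 * kdiag kν ke ku kd 0) :=
      diagI_inj (liftI_inj hr) 0
    have hl0 : (-odB (mconj (kdiag kν ke ku kd 0) * H1') (H2' * kdiag kν ke ku kd 0))ᴴ
        = -odB (mconj (kdiag kν ke ku kd 0) * H1') (H2' * kdiag kν ke ku kd 0) :=
      diagI_inj (liftI_inj hl) 0
    rw [odB_ct] at hr0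
    rw [Matrix.conjTranspose_neg, neg_inj, odB_ct] at hl0
    obtain ⟨-, hB⟩ := odB_inj hr0
    obtain ⟨-, hB'⟩ := odB_inj hl0
    rw [Matrix.conjTranspose_mul, mconj_ct, kdiag_t] at hB hB'
    have hd0 : ∀ j : Fin 2, (![kν, ke] : Fin 2 → ℂ) j ≠ 0 := by
      intro j; fin_cases j <;> simpa using ‹_›
    have hk0 : kdiag kν ke ku kd 0 = Matrix.diagonal ![kν, ke] := by simp [kdiag]
    rw [hk0] at hB hB'
    exact ⟨(cancel_diag hd0 hB).symm, (cancel_diag hd0 hB').symm⟩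
  · rintro ⟨rfl, rfl⟩
    show _ = _
    rw [dgB_ct, dgB_ct, liftI_ct, liftI_ct, diagI_ct, diagI_ct,
      Matrix.conjTranspose_zero]
    have e1 : (fun I => (odB (mconj (kdiag kν ke ku kd I) * H1)
          (H1ᴴ * kdiag kν ke ku kd I))ᴴ)
        = fun I => odB (mconj (kdiag kν ke ku kd I) * H1) (H1ᴴ * kdiag kν ke ku kd I) := by
      funext I
      rw [odB_ct, Matrix.conjTranspose_mul, Matrix.conjTranspose_mul, mconj_ct,
        kdiag_t, kdiag_ct, Matrix.conjTranspose_conjTranspose]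
    have e2 : (fun I => (-odB (mconj (kdiag kν ke ku kd I) * H1')
          (H1'ᴴ * kdiag kν ke ku kd I))ᴴ)
        = fun I => -odB (mconj (kdiag kν ke ku kd I) * H1') (H1'ᴴ * kdiag kν ke ku kd I) := by
      funext I
      rw [Matrix.conjTranspose_neg, odB_ct, Matrix.conjTranspose_mul,
        Matrix.conjTranspose_mul, mconj_ct, kdiag_t, kdiag_ct,
        Matrix.conjTranspose_conjTranspose]
    rw [e1, e2]



end TwistSM
end
end

section
/- Let a_i = (c_i,c'_i,q_i,q'_i,m_i,m'_i) and b_i = (d_i,d'_i,p_i,p'_i,n_i,n'_i), i = 1,…,N, be differentiable functions from ℝ⁴ to the twisted algebra, and let D̸ := −i Σ_μ (γ^μ_E⊗I₃₂)·∂_μ act on differentiable ψ : ℝ⁴ → ℂ¹²⁸. Then the free twisted 1-form Σ_i π(a_i)·[D̸, π(b_i)]_ρ is the operator of multiplication by −i Σ_μ (γ^μ_E⊗I₃₂)·A_μ, where A_μ = diag_C(Q_μ, M_μ); Q_μ acts trivially on ṡ and I, Q_μ = diag_s(Q^r_μ, Q^l_μ) with Q^r_μ = diag(c^r_μ, conj(c^r_μ),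 q^r_μ), Q^l_μ = diag(c^l_μ, conj(c^l_μ), q^l_μ) on the flavour index, where c^r_μ := Σ_i c'_i·∂_μd_i, q^r_μ := Σ_i q_i·∂_μp'_i, c^l_μ := Σ_i c_i·∂_μd'_i, q^l_μ := Σ_i q'_i·∂_μp_i; and M_μ acts trivially on ṡ, M_μ = diag_s(M^r_μ, M^l_μ) with M^r_μ = diag_α(𝗆^r_μ⊗I₂, 𝗆^l_μ⊗I₂), M^l_μ = diag_α(𝗆^l_μ⊗I₂, 𝗆^r_μ⊗I₂), where 𝗆^r_μ := diag(c^r_μ, m^r_μ), 𝗆^l_μ := diag(c^l_μ, m^l_μ), m^r_μ := Σ_i m'_i·∂_μn_i, m^l_μ := Σ_i m_i·∂_μn'_i. -/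
/-!
The Euclidean Dirac matrices are off-diagonal in the chirality index `s`, so `γ^μ_E ⊗ I₃₂`
exchanges the right and left blocks of `π`; the twist `ρ` exchanges them as well, whence
`(γ^μ_E ⊗ I₃₂) π(b) = π(ρ b) (γ^μ_E ⊗ I₃₂)`. With the Leibniz rule this makes `[D̸, π(b)]_ρ`
multiplication by `-i Σ_μ (γ^μ_E ⊗ I₃₂) ∂_μ π(b)`, and moving `π(a)` past `γ^μ_E` turns it
into `π(ρ a)`. Finally, `π(a)` itself has the block shape of `A_μ`
(`π(a) = freeA c c' q' q m m'`), a shape preserved by products, sums and derivatives, so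
`Σ_i π(ρ aᵢ) ∂_μ π(bᵢ)` is `A_μ` computed blockwise.
-/

open Matrix

noncomputable section

namespace TwistSM

/-- Differentiability of a twisted-algebra-valued function (componentwise). -/
def AlgDiff (f : (Fin 4 → ℝ) → Alg) : Prop :=
  Differentiable ℝ (fun x => (f x).c) ∧ Differentiable ℝ (fun x => (f x).c') ∧
  (∀ k l, Differentiable ℝ fun x => (f x).q k l) ∧
  (∀ k l, Differentiable ℝ fun x => (f x).q' k l) ∧
  (∀ k l, Differentiable ℝ fun x => (f x).m k l) ∧
  (∀ k l, Differentiable ℝ fun x => (f x).m' k l)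

/-- The free Dirac operator D̸ = −i Σ_μ (γ^μ_E⊗I₃₂)·∂_μ on ℂ¹²⁸-valued functions. -/
def Dslash (ψ : (Fin 4 → ℝ) → Full → ℂ) (x : Fin 4 → ℝ) : Full → ℂ :=
  (-Complex.I) • ∑ μ, (liftSpin (gammaE μ)).mulVec fun p => pdC μ (fun y => ψ y p) x

open scoped Kronecker

lemma dgB_mul {m : Type} [Fintype m] (A B A' B' : Matrix m m ℂ) :
    dgB A B * dgB A' B' = dgB (A * A') (B * B') := by
  ext ⟨i, p⟩ ⟨j, q⟩
  simp only [dgB, mul_apply, Fintype.sum_prod_type, of_apply, Fin.sum_univ_two]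
  fin_cases i <;> fin_cases j <;> simp

lemma odB_mul_dgB_s11 {m : Type} [Fintype m] (A B X Y : Matrix m m ℂ) :
    odB A B * dgB X Y = odB (A * Y) (B * X) := by
  ext ⟨i, p⟩ ⟨j, q⟩
  simp only [dgB, odB, mul_apply, Fintype.sum_prod_type, of_apply, Fin.sum_univ_two]
  fin_cases i <;> fin_cases j <;> simp

lemma dgB_mul_odB_s11 {m : Type} [Fintype m] (A B X Y : Matrix m m ℂ) :
    dgB X Y * odB A B = odB (X * A) (Y * B) := by
  ext ⟨i, p⟩ ⟨j, q⟩
  simp only [dgB, odB, mul_apply, Fintype.sum_prod_type, of_apply, Fin.sum_univ_two]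
  fin_cases i <;> fin_cases j <;> simp

lemma liftI_eq_kronecker (X : Matrix Intl Intl ℂ) : liftI X = 1 ⊗ₖ X := by
  ext ⟨s, p⟩ ⟨t, q⟩
  by_cases h : s = t <;> simp [liftI, one_apply, h]

lemma liftQ_eq_liftI (X : Matrix Flav Flav ℂ) : liftQ X = liftI (1 ⊗ₖ X) := by
  ext ⟨s, i, f⟩ ⟨t, j, g⟩
  by_cases h : i = j <;> simp [liftQ, liftI, one_apply, h]

lemma liftSpin_odB (S T : Matrix (Fin 2) (Fin 2) ℂ) :
    liftSpin (odB S T) =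
      dgB (odB (S ⊗ₖ (1 : Matrix Intl Intl ℂ)) (T ⊗ₖ 1)) (odB (S ⊗ₖ 1) (T ⊗ₖ 1)) := by
  ext ⟨c, s, t, p⟩ ⟨c', s', t', q⟩
  by_cases hc : c = c' <;> by_cases hp : p = q <;> by_cases hs : s = 0 <;>
    by_cases hs' : s' = 0 <;> simp [liftSpin, odB, dgB, one_apply, hc, hp, hs, hs']

lemma msect_eq_blockDiagonal (A B : Matrix (Fin 4) (Fin 4) ℂ) :
    msect A B = blockDiagonal fun f : Flav => if f.1 = 0 then A else B := by
  ext ⟨i, f⟩ ⟨j, g⟩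
  simp only [msect, blockDiagonal_apply, of_apply]
  split_ifs <;> simp_all

lemma msect_mul (A B A' B' : Matrix (Fin 4) (Fin 4) ℂ) :
    msect A B * msect A' B' = msect (A * A') (B * B') := by
  simp only [msect_eq_blockDiagonal, ← blockDiagonal_mul]
  congr 1
  funext f
  split_ifs <;> rfl

lemma sm4_mul (c c' : ℂ) (m m' : Matrix (Fin 3) (Fin 3) ℂ) :
    sm4 c m * sm4 c' m' = sm4 (c * c') (m * m') := by
  ext i j
  fin_cases i <;> fin_cases j <;>
    simp [sm4, mul_apply, Fin.sum_univ_four, Fin.sum_univ_three, pred3]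

lemma cdiag_mul (c d : ℂ) : cdiag c * cdiag d = cdiag (c * d) := by
  rw [cdiag, cdiag, cdiag, diagonal_mul_diagonal]
  congr 1
  funext i
  fin_cases i <;> simp

lemma rep_eq_freeA (a : Alg) : rep a = freeA a.c a.c' a.q' a.q a.m a.m' := rfl

lemma rep_rho_eq_freeA (a : Alg) : rep a.rho = freeA a.c' a.c a.q a.q' a.m' a.m := rfl

lemma freeA_mul (cr cl : ℂ) (qr ql : Matrix (Fin 2) (Fin 2) ℂ) (mr ml : Matrix (Fin 3) (Fin 3) ℂ)
    (cr' cl' : ℂ) (qr' ql' : Matrix (Fin 2) (Fin 2) ℂ) (mr' ml' : Matrix (Fin 3) (Fin 3) ℂ) :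
    freeA cr cl qr ql mr ml * freeA cr' cl' qr' ql' mr' ml' =
      freeA (cr * cr') (cl * cl') (qr * qr') (ql * ql') (mr * mr') (ml * ml') := by
  simp only [freeA, freeQ, freeM, dgB_mul, liftQ_eq_liftI, liftI_eq_kronecker, ← mul_kronecker_mul,
    mul_one, msect_mul, sm4_mul, cdiag_mul]

lemma liftSpin_odB_mul_freeA (S T : Matrix (Fin 2) (Fin 2) ℂ) (cr cl : ℂ)
    (qr ql : Matrix (Fin 2) (Fin 2) ℂ) (mr ml : Matrix (Fin 3) (Fin 3) ℂ) :
    liftSpin (odB S T) * freeA cr cl qr ql mr ml =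
      freeA cl cr ql qr ml mr * liftSpin (odB S T) := by
  simp only [liftSpin_odB, freeA, freeQ, freeM, dgB_mul, odB_mul_dgB_s11, dgB_mul_odB_s11,
    liftQ_eq_liftI, liftI_eq_kronecker, ← mul_kronecker_mul, mul_one, one_mul]

lemma liftSpin_gammaE_mul_rep (μ : Fin 4) (a : Alg) :
    liftSpin (gammaE μ) * rep a = rep a.rho * liftSpin (gammaE μ) := by
  rw [rep_eq_freeA, rep_rho_eq_freeA]
  exact liftSpin_odB_mul_freeA _ _ _ _ _ _ _ _

lemma cdiag_apply (c : ℂ) (i j : Fin 2) :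
    cdiag c i j = if i = j then (if i = 0 then c else starRingEnd ℂ c) else 0 := by
  fin_cases i <;> fin_cases j <;> simp [cdiag]

lemma freeA_sum {ι : Type*} (s : Finset ι) (cr cl : ι → ℂ) (qr ql : ι → Matrix (Fin 2) (Fin 2) ℂ)
    (mr ml : ι → Matrix (Fin 3) (Fin 3) ℂ) :
    ∑ i ∈ s, freeA (cr i) (cl i) (qr i) (ql i) (mr i) (ml i) =
      freeA (∑ i ∈ s, cr i) (∑ i ∈ s, cl i) (∑ i ∈ s, qr i) (∑ i ∈ s, ql i)
        (∑ i ∈ s, mr i) (∑ i ∈ s, ml i) := by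
  ext p q
  simp only [Matrix.sum_apply, freeA, freeQ, freeM, dgB, liftQ, liftI, msect, sm4, cdiag_apply,
    of_apply, Finset.sum_ite_irrel, Finset.sum_const_zero, map_sum]

section Calculus

variable (μ : Fin 4) (x : Fin 4 → ℝ)

lemma pdC_const (c : ℂ) : pdC μ (fun _ => c) x = 0 := by
  simp [pdC]

lemma pdC_conj (f : (Fin 4 → ℝ) → ℂ) :
    pdC μ (fun y => starRingEnd ℂ (f y)) x = starRingEnd ℂ (pdC μ f x) :=
  congrArg (· (Pi.single μ 1)) (fderiv_star (𝕜 := ℝ) (f := f) (x := x))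

lemma pdC_ite (P : Prop) [Decidable P] (f g : (Fin 4 → ℝ) → ℂ) :
    pdC μ (fun y => if P then f y else g y) x = if P then pdC μ f x else pdC μ g x := by
  split_ifs <;> rfl

lemma pdC_mul {f g : (Fin 4 → ℝ) → ℂ} (hf : DifferentiableAt ℝ f x) (hg : DifferentiableAt ℝ g x) :
    pdC μ (fun y => f y * g y) x = pdC μ f x * g x + f x * pdC μ g x := by
  simp only [pdC, fderiv_fun_mul hf hg, _root_.add_apply, _root_.smul_apply, smul_eq_mul]
  ring

lemma pdC_sum {ι : Type*} (s : Finset ι) {f : ι → (Fin 4 → ℝ) → ℂ}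
    (hf : ∀ i ∈ s, DifferentiableAt ℝ (f i) x) :
    pdC μ (fun y => ∑ i ∈ s, f i y) x = ∑ i ∈ s, pdC μ (f i) x := by
  simp [pdC, fderiv_fun_sum hf]

lemma pdC_mulVec {n : Type} [Fintype n] {M : (Fin 4 → ℝ) → Matrix n n ℂ} {ψ : (Fin 4 → ℝ) → n → ℂ}
    (hM : ∀ p q, DifferentiableAt ℝ (fun y => M y p q) x)
    (hψ : ∀ p, DifferentiableAt ℝ (fun y => ψ y p) x) :
    (fun p => pdC μ (fun y => (M y *ᵥ ψ y) p) x) =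
      pdM μ M x *ᵥ ψ x + M x *ᵥ fun p => pdC μ (fun y => ψ y p) x := by
  funext p
  simp only [mulVec, dotProduct]
  rw [pdC_sum μ x _ fun r _ => (hM p r).fun_mul (hψ r)]
  simp only [pdC_mul μ x (hM p _) (hψ _), Finset.sum_add_distrib]
  rfl

lemma pdM_freeA (cr cl : (Fin 4 → ℝ) → ℂ) (qr ql : (Fin 4 → ℝ) → Matrix (Fin 2) (Fin 2) ℂ)
    (mr ml : (Fin 4 → ℝ) → Matrix (Fin 3) (Fin 3) ℂ) :
    pdM μ (fun y => freeA (cr y) (cl y) (qr y) (ql y) (mr y) (ml y)) x =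
      freeA (pdC μ cr x) (pdC μ cl x) (pdM μ qr x) (pdM μ ql x) (pdM μ mr x) (pdM μ ml x) := by
  ext p q
  simp only [pdM, freeA, freeQ, freeM, dgB, liftQ, liftI, msect, sm4, cdiag_apply, of_apply,
    pdC_ite, pdC_const, pdC_conj]

lemma pdM_rep (b : (Fin 4 → ℝ) → Alg) :
    pdM μ (fun y => rep (b y)) x =
      freeA (pdC μ (fun y => (b y).c) x) (pdC μ (fun y => (b y).c') x)
        (pdM μ (fun y => (b y).q') x) (pdM μ (fun y => (b y).q) x)
        (pdM μ (fun y => (b y).m) x) (pdM μ (fun y => (b y).m') x) :=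
  pdM_freeA μ x _ _ _ _ _ _

end Calculus

lemma differentiable_ite_const {P : Prop} [Decidable P] {f g : (Fin 4 → ℝ) → ℂ}
    (hf : Differentiable ℝ f) (hg : Differentiable ℝ g) :
    Differentiable ℝ fun y => if P then f y else g y := by
  split_ifs <;> assumption

lemma differentiable_freeA_apply {cr cl : (Fin 4 → ℝ) → ℂ}
    {qr ql : (Fin 4 → ℝ) → Matrix (Fin 2) (Fin 2) ℂ}
    {mr ml : (Fin 4 → ℝ) → Matrix (Fin 3) (Fin 3) ℂ}
    (hcr : Differentiable ℝ cr) (hcl : Differentiable ℝ cl)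
    (hqr : ∀ k l, Differentiable ℝ fun y => qr y k l)
    (hql : ∀ k l, Differentiable ℝ fun y => ql y k l)
    (hmr : ∀ k l, Differentiable ℝ fun y => mr y k l)
    (hml : ∀ k l, Differentiable ℝ fun y => ml y k l) (p q : Full) :
    Differentiable ℝ fun y => freeA (cr y) (cl y) (qr y) (ql y) (mr y) (ml y) p q := by
  simp only [freeA, freeQ, freeM, dgB, liftQ, liftI, msect, sm4, cdiag_apply, of_apply]
  repeat' apply differentiable_ite_const
  all_goals fun_prop

lemma differentiable_rep_apply {b : (Fin 4 → ℝ) → Alg} (hb : AlgDiff b) (p q : Full) :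
    Differentiable ℝ fun y => rep (b y) p q :=
  have ⟨hc, hc', hq, hq', hm, hm'⟩ := hb
  differentiable_freeA_apply hc hc' hq' hq hm hm' p q

lemma Dslash_rep_mulVec_sub {b : (Fin 4 → ℝ) → Alg} (hb : AlgDiff b) {ψ : (Fin 4 → ℝ) → Full → ℂ}
    {x : Fin 4 → ℝ} (hψ : ∀ p, DifferentiableAt ℝ (fun y => ψ y p) x) :
    Dslash (fun y => rep (b y) *ᵥ ψ y) x - rep (b x).rho *ᵥ Dslash ψ x =
      (-Complex.I) • ∑ μ, liftSpin (gammaE μ) *ᵥ (pdM μ (fun y => rep (b y)) x *ᵥ ψ x) := by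
  have leibniz (μ : Fin 4) :
      liftSpin (gammaE μ) *ᵥ (fun p => pdC μ (fun y => (rep (b y) *ᵥ ψ y) p) x) =
        liftSpin (gammaE μ) *ᵥ (pdM μ (fun y => rep (b y)) x *ᵥ ψ x) +
          rep (b x).rho *ᵥ (liftSpin (gammaE μ) *ᵥ fun p => pdC μ (fun y => ψ y p) x) := by
    rw [pdC_mulVec μ x (fun p q => differentiable_rep_apply hb p q x) hψ, mulVec_add]
    congr 1
    rw [mulVec_mulVec, liftSpin_gammaE_mul_rep, ← mulVec_mulVec]
  simp only [Dslash, leibniz, Finset.sum_add_distrib, smul_add, ← mulVec_sum, mulVec_smul,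
    add_sub_cancel_right]

lemma rep_mulVec_Dslash_rep_mulVec_sub (a : Alg) {b : (Fin 4 → ℝ) → Alg} (hb : AlgDiff b)
    {ψ : (Fin 4 → ℝ) → Full → ℂ} {x : Fin 4 → ℝ}
    (hψ : ∀ p, DifferentiableAt ℝ (fun y => ψ y p) x) :
    rep a *ᵥ (Dslash (fun y => rep (b y) *ᵥ ψ y) x - rep (b x).rho *ᵥ Dslash ψ x) =
      (-Complex.I) • ∑ μ, liftSpin (gammaE μ) *ᵥ
        ((rep a.rho * pdM μ (fun y => rep (b y)) x) *ᵥ ψ x) := by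
  rw [Dslash_rep_mulVec_sub hb hψ, mulVec_smul, mulVec_sum]
  congr 1
  refine Finset.sum_congr rfl fun μ _ => ?_
  rw [mulVec_mulVec, mulVec_mulVec, mulVec_mulVec, ← mul_assoc,
    liftSpin_gammaE_mul_rep]
  rfl

lemma rep_rho_mul_pdM_rep (a : Alg) (μ : Fin 4) (b : (Fin 4 → ℝ) → Alg) (x : Fin 4 → ℝ) :
    rep a.rho * pdM μ (fun y => rep (b y)) x =
      freeA (a.c' * pdC μ (fun y => (b y).c) x) (a.c * pdC μ (fun y => (b y).c') x)
        (a.q * pdM μ (fun y => (b y).q') x) (a.q' * pdM μ (fun y => (b y).q) x)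
        (a.m' * pdM μ (fun y => (b y).m) x) (a.m * pdM μ (fun y => (b y).m') x) := by
  rw [rep_rho_eq_freeA, pdM_rep, freeA_mul]

/-- the free twisted 1-form Σᵢ π(aᵢ)·[D̸, π(bᵢ)]_ρ is multiplication by
−i Σ_μ (γ^μ_E⊗I₃₂)·A_μ, where A_μ has the free 1-form block structure with components
c^r_μ = Σᵢ c'ᵢ ∂_μdᵢ, c^l_μ = Σᵢ cᵢ ∂_μd'ᵢ, q^r_μ = Σᵢ qᵢ ∂_μp'ᵢ, q^l_μ = Σᵢ q'ᵢ ∂_μpᵢ,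
m^r_μ = Σᵢ m'ᵢ ∂_μnᵢ, m^l_μ = Σᵢ mᵢ ∂_μn'ᵢ. -/
theorem statement11 (N : ℕ) (a b : Fin N → (Fin 4 → ℝ) → Alg)
    (hb : ∀ i, AlgDiff (b i))
    (ψ : (Fin 4 → ℝ) → Full → ℂ)
    (hψ : ∀ p, Differentiable ℝ fun x => ψ x p)
    (x : Fin 4 → ℝ) :
    (∑ i, (rep (a i x)).mulVec
        (Dslash (fun y => (rep (b i y)).mulVec (ψ y)) x
          - (rep ((b i x).rho)).mulVec (Dslash ψ x)))
      = (-Complex.I) • ∑ μ, (liftSpin (gammaE μ)).mulVec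
          ((freeA (∑ i, (a i x).c' * pdC μ (fun y => (b i y).c) x)
                  (∑ i, (a i x).c * pdC μ (fun y => (b i y).c') x)
                  (∑ i, (a i x).q * pdM μ (fun y => (b i y).q') x)
                  (∑ i, (a i x).q' * pdM μ (fun y => (b i y).q) x)
                  (∑ i, (a i x).m' * pdM μ (fun y => (b i y).m) x)
                  (∑ i, (a i x).m * pdM μ (fun y => (b i y).m') x)).mulVec (ψ x)) := by
  simp only [rep_mulVec_Dslash_rep_mulVec_sub _ (hb _) fun p => (hψ p) x, rep_rho_mul_pdM_rep,
    ← Finset.smul_sum, ← freeA_sum, sum_mulVec, mulVec_sum]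
  rw [Finset.sum_comm]

end TwistSM
end
end
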